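/- arXiv:math/0104277 — 3 statements merged into one kernel-verified Lean document; each statement's English description precedes it below -/
import Mathlib

section
/- Let M = (ℕ ∪ ℤ, <) be the linear order consisting of a copy of ℕ followed by a copy of ℤ, where every element of the ℤ-part is greater than every element of the ℕ-part. Then the ℕ-part is implicitly definable in M: it is the unique nonempty proper initial segment of M that has no last element, and this property is expressible by an L ∪ {P}-sentence in the language L = {<} with a new unary predicate symbol P. -/
/-!
Let `s` be a nonempty proper initial segment of `ℕ ⊕ₗ ℤ` without a last element. In `ℕ` and in `ℤ`
every element has an immediate successor reached from any smaller one in finitely many steps, so a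
nonempty initial segment without a last element of either order is everything. If `s` met the
`ℤ`-part, it would therefore contain all of it and hence everything; so `s` lies in the `ℕ`-part and
is all of it.
-/

open FirstOrder Language Structure

/-- The single binary relation symbol `<`. -/
inductive OrdRel : ℕ → Type
  | lt : OrdRel 2

/-- The first-order language `L = {<}`. -/
def Llt : Language := ⟨fun _ => Empty, OrdRel⟩

/-- The linear order `M = (ℕ ∪ ℤ, <)`: a copy of `ℕ` followed by a copy of `ℤ`,
every element of the `ℤ`-part being greater than every element of the `ℕ`-part. -/
abbrev NZ : Type := ℕ ⊕ₗ ℤ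

/-- `NZ` as an `{<}`-structure. -/
instance : Llt.Structure NZ where
  funMap := fun {_} f => Empty.elim f
  RelMap := fun {_} r => match r with
    | OrdRel.lt => fun v => v 0 < v 1

/-- The `ℕ`-part of `NZ`. -/
def NPart : Set NZ := Set.range fun n : ℕ => toLex (Sum.inl n)

/-- A single unary predicate symbol `P`. -/
inductive PRel : ℕ → Type
  | p : PRel 1

/-- The language consisting of the single unary predicate symbol `P`. -/
def LP : Language := ⟨fun _ => Empty, PRel⟩

/-- The `LP`-structure on `M` in which `P` is interpreted by the set `B`. -/
def pStruct (M : Type) (B : Set M) : LP.Structure M where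
  funMap := fun {_} f => Empty.elim f
  RelMap := fun {_} r => match r with
    | PRel.p => fun v => v 0 ∈ B

/-- `A` is implicitly definable in the `L`-structure `M` if there is an
`L ∪ {P}`-sentence `φ(P)` with parameters from `M` (equivalently, an
`L ∪ {P}`-formula together with an assignment of its free variables in `M`),
where `P` is a new unary predicate symbol, such that `A` is the unique subset
`B ⊆ M` with `(M, B) ⊨ φ(B)`. -/
def ImplicitlyDefinable (L : Language) (M : Type) [L.Structure M] (A : Set M) : Prop :=
  ∃ (n : ℕ) (φ : (L.sum LP).Formula (Fin n)) (v : Fin n → M),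
    ∀ B : Set M,
      (letI : LP.Structure M := pStruct M B
       φ.Realize v) ↔ B = A

open Set Sum

theorem IsLowerSet.eq_univ_of_forall_exists_gt {α : Type*} [LinearOrder α] [SuccOrder α]
    [IsSuccArchimedean α] {s : Set α} (hs : IsLowerSet s) (hne : s.Nonempty)
    (hmax : ∀ x ∈ s, ∃ y ∈ s, x < y) : s = univ := by
  obtain ⟨a, ha⟩ := hne
  refine eq_univ_of_forall fun b => ?_
  rcases le_total b a with hba | hab
  · exact hs hba ha
  · induction hab using Succ.rec with
    | rfl => exact ha
    | succ n _ hn =>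
      obtain ⟨y, hy, hny⟩ := hmax n hn
      exact hs (Order.succ_le_of_lt hny) hy

theorem isLowerSet_iff_forall_mem_lt {α : Type*} [PartialOrder α] {s : Set α} :
    IsLowerSet s ↔ ∀ x ∈ s, ∀ y, y < x → y ∈ s :=
  isLowerSet_iff_forall_lt.trans ⟨fun h _ hx _ hyx => h hyx hx, fun h _ _ hyx hx => h _ hx _ hyx⟩

namespace Sum.Lex

variable {α β : Type*} [LinearOrder α] [LinearOrder β] {s : Set (α ⊕ₗ β)}

theorem eq_univ_of_toLex_inr_mem [SuccOrder β] [IsSuccArchimedean β] (hs : IsLowerSet s)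
    (hmax : ∀ x ∈ s, ∃ y ∈ s, x < y) {b : β} (hb : toLex (inr b) ∈ s) : s = univ := by
  have hinr : toLex ∘ inr ⁻¹' s = univ := by
    refine (hs.preimage inr_mono).eq_univ_of_forall_exists_gt ⟨b, hb⟩ fun c hc => ?_
    obtain ⟨a | d, hd, hcd⟩ := hmax _ hc
    · exact absurd hcd not_inr_lt_inl
    · exact ⟨d, hd, inr_lt_inr_iff.1 hcd⟩
  refine eq_univ_of_forall ?_
  rintro (a | c)
  · exact hs (inl_le_inr a b) hb
  · exact eq_univ_iff_forall.1 hinr c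

theorem eq_range_inl_of_forall_toLex_inr_notMem [SuccOrder α] [IsSuccArchimedean α]
    (hs : IsLowerSet s) (hne : s.Nonempty) (hmax : ∀ x ∈ s, ∃ y ∈ s, x < y)
    (hinr : ∀ b : β, toLex (inr b) ∉ s) : s = range (toLex ∘ inl) := by
  have hinl : toLex ∘ inl ⁻¹' s = univ := by
    obtain ⟨a | b, ha⟩ := hne
    · refine (hs.preimage inl_mono).eq_univ_of_forall_exists_gt ⟨a, ha⟩ fun c hc => ?_
      obtain ⟨d | d, hd, hcd⟩ := hmax _ hc
      · exact ⟨d, hd, inl_lt_inl_iff.1 hcd⟩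
      · exact absurd hd (hinr d)
    · exact absurd ha (hinr b)
  ext (a | b)
  · exact iff_of_true (eq_univ_iff_forall.1 hinl a) (mem_range_self a)
  · refine iff_of_false (hinr b) ?_
    rintro ⟨a, ha⟩
    exact inl_ne_inr (toLex.injective ha)

theorem eq_range_inl_iff [SuccOrder α] [IsSuccArchimedean α] [SuccOrder β] [IsSuccArchimedean β]
    [Nonempty α] [NoMaxOrder α] [Nonempty β] :
    s = range (toLex ∘ inl) ↔
      s.Nonempty ∧ s ≠ univ ∧ IsLowerSet s ∧ ∀ x ∈ s, ∃ y ∈ s, x < y := by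
  constructor
  · rintro rfl
    refine ⟨range_nonempty _, ?_, ?_, ?_⟩
    · obtain ⟨b⟩ := ‹Nonempty β›
      refine (ne_univ_iff_exists_notMem _).2 ⟨toLex (inr b), ?_⟩
      rintro ⟨a, ha⟩
      exact inl_ne_inr (toLex.injective ha)
    · rintro _ x hxa ⟨a, rfl⟩
      rcases x with c | c
      · exact mem_range_self c
      · exact absurd hxa not_inr_le_inl
    · rintro _ ⟨a, rfl⟩
      obtain ⟨c, hac⟩ := exists_gt a
      exact ⟨_, mem_range_self c, inl_lt_inl_iff.2 hac⟩
  · rintro ⟨hne, hne_univ, hs, hmax⟩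
    exact eq_range_inl_of_forall_toLex_inr_notMem hs hne hmax fun b hb =>
      hne_univ (eq_univ_of_toLex_inr_mem hs hmax hb)

end Sum.Lex

def ltRel : (Llt.sum LP).Relations 2 := Sum.inl OrdRel.lt

def pRel : (Llt.sum LP).Relations 1 := Sum.inr PRel.p

def initialSegmentNoMaxFormula : (Llt.sum LP).Formula (Fin 0) :=
  ∃' pRel.boundedFormula₁ &0 ⊓ ∃' ∼(pRel.boundedFormula₁ &0) ⊓
    ∀' ∀' (pRel.boundedFormula₁ &0 ⊓ ltRel.boundedFormula₂ &1 &0 ⟹ pRel.boundedFormula₁ &1) ⊓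
    ∀' (pRel.boundedFormula₁ &0 ⟹ ∃' (pRel.boundedFormula₁ &1 ⊓ ltRel.boundedFormula₂ &0 &1))

theorem realize_initialSegmentNoMaxFormula (B : Set NZ) (v : Fin 0 → NZ) :
    (letI := pStruct NZ B; initialSegmentNoMaxFormula.Realize v) ↔
      B.Nonempty ∧ B ≠ univ ∧ (∀ x ∈ B, ∀ y, y < x → y ∈ B) ∧ ∀ x ∈ B, ∃ y ∈ B, x < y := by
  let := pStruct NZ B
  have hP : ∀ x : NZ, RelMap pRel ![x] ↔ x ∈ B := fun _ => Iff.rfl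
  have hlt : ∀ x y : NZ, RelMap ltRel ![x, y] ↔ x < y := fun _ _ => Iff.rfl
  simp only [initialSegmentNoMaxFormula, Formula.Realize, BoundedFormula.realize_inf,
    BoundedFormula.realize_ex, BoundedFormula.realize_all, BoundedFormula.realize_not,
    BoundedFormula.realize_imp, BoundedFormula.realize_rel₁, BoundedFormula.realize_rel₂,
    Function.comp_apply, Term.realize_var, Sum.elim_inr, hP, hlt]
  change (((∃ x, x ∈ B) ∧ ∃ x, x ∉ B) ∧ ∀ x y, x ∈ B ∧ y < x → y ∈ B) ∧
      (∀ x, x ∈ B → ∃ y, y ∈ B ∧ x < y) ↔ _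
  rw [ne_univ_iff_exists_notMem]
  tauto

/-- The `ℕ`-part of `M = (ℕ ∪ ℤ, <)` is the unique nonempty proper
initial segment of `M` with no last element, and it is implicitly definable in `M`
(this property being expressible by an `L ∪ {P}`-sentence). -/
theorem nPart_implicitly_definable :
    (∀ B : Set NZ,
        (B.Nonempty ∧ B ≠ Set.univ ∧ (∀ x ∈ B, ∀ y, y < x → y ∈ B) ∧
          ∀ x ∈ B, ∃ y ∈ B, x < y) ↔ B = NPart) ∧
    ImplicitlyDefinable Llt NZ NPart := by
  have hchar (B : Set NZ) :
      B = NPart ↔ B.Nonempty ∧ B ≠ univ ∧ IsLowerSet B ∧ ∀ x ∈ B, ∃ y ∈ B, x < y :=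
    Sum.Lex.eq_range_inl_iff
  refine ⟨fun B => ?_, 0, initialSegmentNoMaxFormula, default, fun B => ?_⟩
  · rw [hchar, isLowerSet_iff_forall_mem_lt]
  · rw [realize_initialSegmentNoMaxFormula, hchar, isLowerSet_iff_forall_mem_lt]
end

section
/- Let T be a complete theory in a countable language L containing <, 0, S with a partial definable binary function F as in the standing assumptions, and let M ⊨ T. If φ(x, ā) and ψ(x, ā) are formulas with parameters from M such that the disjunction φ ∨ ψ is Γ^sind_F-big in M, then φ is Γ^sind_F-big in M or ψ is Γ^sind_F-big in M. -/
open FirstOrder Language Structure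

/-- The interpretation of the distinguished binary relation symbol `<`. -/
def ltI (L : Language) (ltS : L.Relations 2) {M : Type} [L.Structure M] (a b : M) : Prop :=
  Structure.RelMap ltS ![a, b]

/-- The interpretation of the distinguished constant symbol `0`. -/
def zeroI (L : Language) (zeroS : L.Constants) (M : Type) [L.Structure M] : M :=
  Structure.funMap zeroS ![]

/-- The interpretation of the distinguished unary function symbol `S`. -/
def succI (L : Language) (succS : L.Functions 1) {M : Type} [L.Structure M] (a : M) : M :=
  Structure.funMap succS ![a]

/-- The interpretations `Sⁿ(0)` of the "numerals". -/
def stdI (L : Language) (zeroS : L.Constants) (succS : L.Functions 1)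
    (M : Type) [L.Structure M] : ℕ → M
  | 0 => zeroI L zeroS M
  | n + 1 => succI L succS (stdI L zeroS succS M n)

/-- The standing assumptions: `L` is a countable first-order language containing `<`,
`0` and `S`; `T` is a complete `L`-theory; `Fg(x, y, z)` defines the graph of a partial
binary function `F(x, y)`; and `T` proves (equivalently, since `T` is complete, every
model of `T` satisfies): the partial functionality of `F`; `<` is a linear order with
first element `0`; `S x` is the immediate `<`-successor of `x`; and, for each `n ∈ ω`,
for all pairwise distinct `y₁, …, yₙ` and all `z₁, …, zₙ` there exists `x` with
`F(x, yᵢ) = zᵢ` for all `i ≤ n`. -/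
def StandingAssumptions (L : Language) (ltS : L.Relations 2) (zeroS : L.Constants)
    (succS : L.Functions 1) (T : L.Theory) (Fg : L.Formula (Fin 3)) : Prop :=
  Countable L.Symbols ∧ T.IsComplete ∧
    ∀ (M : Type) [L.Structure M], M ⊨ T →
      (∀ x y z z' : M, Fg.Realize ![x, y, z] → Fg.Realize ![x, y, z'] → z = z') ∧
      ((∀ x : M, ¬ ltI L ltS x x) ∧
       (∀ x y z : M, ltI L ltS x y → ltI L ltS y z → ltI L ltS x z) ∧
       (∀ x y : M, ltI L ltS x y ∨ x = y ∨ ltI L ltS y x) ∧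
       (∀ x : M, x = zeroI L zeroS M ∨ ltI L ltS (zeroI L zeroS M) x)) ∧
      (∀ x : M, ltI L ltS x (succI L succS x) ∧
        ∀ y : M, ltI L ltS x y → succI L succS x = y ∨ ltI L ltS (succI L succS x) y) ∧
      (∀ (n : ℕ) (ys : Fin n → M), Function.Injective ys → ∀ zs : Fin n → M,
        ∃ x : M, ∀ i, Fg.Realize ![x, ys i, zs i])

/-- `(M, I) ⊨ ψ*(P)`: the set `I` is a cut (nonempty proper initial segment closed
under `S`), and for no `x` and `z ∈ I` is the set `{F(x, y) : y} ∩ I` unbounded in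
`I`, i.e. `∀x∀z[P(z) → ∃w(P(w) ∧ ∀y(P(F(x,y)) → F(x,y) < w))]` (with the partial
function `F` given by its graph `Fg`). -/
def PsiStar (L : Language) (ltS : L.Relations 2) (zeroS : L.Constants)
    (succS : L.Functions 1) (Fg : L.Formula (Fin 3))
    (M : Type) [L.Structure M] (I : Set M) : Prop :=
  (I ≠ Set.univ ∧ zeroI L zeroS M ∈ I ∧
    (∀ x y : M, y ∈ I → ltI L ltS x y → x ∈ I) ∧
    ∀ x ∈ I, succI L succS x ∈ I) ∧
  ∀ x z : M, z ∈ I → ∃ w ∈ I, ∀ y v : M, Fg.Realize ![x, y, v] → v ∈ I → ltI L ltS v w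

/-- `M` is `ψ*`-appropriate: `M ≠ {Sⁿ(0) : n ∈ ω}`, and whenever `(M, I) ⊨ ψ*(P)`,
either `I = {Sⁿ(0) : n ∈ ω}` or `I` is definable in `M` by an `L`-formula with
parameters. -/
def PsiAppropriate (L : Language) (ltS : L.Relations 2) (zeroS : L.Constants)
    (succS : L.Functions 1) (Fg : L.Formula (Fin 3)) (M : Type) [L.Structure M] : Prop :=
  Set.range (stdI L zeroS succS M) ≠ Set.univ ∧
    ∀ I : Set M, PsiStar L ltS zeroS succS Fg M I →
      I = Set.range (stdI L zeroS succS M) ∨ Set.Definable₁ (Set.univ : Set M) L I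


/-- `N` is `ℵ₁`-saturated (equivalently `|T|⁺`-saturated, for a complete theory `T`
in a countable language): every finitely satisfiable set of formulas in one free
variable with parameters from a countable subset `A ⊆ N` is satisfiable in `N`. -/
def AlephOneSaturated (L : Language) (N : Type) [L.Structure N] : Prop :=
  ∀ A : Set N, A.Countable →
    ∀ S : Set (L.Formula (↥A ⊕ Fin 1)),
      (∀ S₀ : Finset (L.Formula (↥A ⊕ Fin 1)), ↑S₀ ⊆ S →
        ∃ x : N, ∀ φ ∈ S₀, Formula.Realize φ (Sum.elim Subtype.val fun _ => x)) →
      ∃ x : N, ∀ φ ∈ S, Formula.Realize φ (Sum.elim Subtype.val fun _ => x)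

/-- The witnessing condition for `Γ^sind_F`-bigness of the formula `φ(x, ā)` (with
parameters `ā` from `M`) in a given elementary extension `e : M ≺ N`: there is a set
`A ⊆ N` with `|A| ≤ |T| (= ℵ₀)` such that for any finitely many pairwise distinct
`a₁, …, aₙ ∈ N \ A` and any `b₁, …, bₙ ∈ N` there is `x` with
`N ⊨ φ(x, ā) ∧ ⋀ᵢ F(x, aᵢ) = bᵢ` (the partial function `F` given by its graph `Fg`). -/
def BigWitness (L : Language) (Fg : L.Formula (Fin 3)) {M N : Type}
    [L.Structure M] [L.Structure N] (e : M ↪ₑ[L] N) {k : ℕ}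
    (φ : L.Formula (Fin k ⊕ Fin 1)) (a : Fin k → M) : Prop :=
  ∃ A : Set N, A.Countable ∧
    ∀ (n : ℕ) (as : Fin n → N), Function.Injective as → (∀ i, as i ∉ A) →
      ∀ bs : Fin n → N, ∃ x : N,
        Formula.Realize φ (Sum.elim (fun i => e (a i)) fun _ => x) ∧
        ∀ i, Fg.Realize ![x, as i, bs i]

/-- `φ(x, ā)` is `Γ^sind_F`-big in `M`: in some `|T|⁺`-saturated elementary extension
`N ≻ M` the witnessing condition holds. -/
def IsBig (L : Language) (Fg : L.Formula (Fin 3)) (M : Type) [L.Structure M] {k : ℕ}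
    (φ : L.Formula (Fin k ⊕ Fin 1)) (a : Fin k → M) : Prop :=
  ∃ (N : Type) (_ : L.Structure N) (e : M ↪ₑ[L] N),
    AlephOneSaturated L N ∧ BigWitness L Fg e φ a

/-! If `φ` fails to be big with respect to the exceptional set `A`, this is witnessed by one
finite assignment `F(x, a₀ⱼ) = b₀ⱼ` (on points `a₀ⱼ ∉ A`) that no realisation of `φ` satisfies.
Adding the finitely many `a₀ⱼ` to `A` then makes `ψ` big: any assignment on points outside
the enlarged set, extended by the bad one, is met by a realisation of `φ ∨ ψ`, which cannot
realise `φ`. The saturated extension is never changed. -/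

def InterpolatesOff {X Y Z : Type*} (R : X → Y → Z → Prop) (P : Set X) (A : Set Y) : Prop :=
  ∀ (n : ℕ) (ys : Fin n → Y), Function.Injective ys → (∀ i, ys i ∉ A) →
    ∀ zs : Fin n → Z, ∃ x ∈ P, ∀ i, R x (ys i) (zs i)

theorem InterpolatesOff.or_exists_finite_of_union {X Y Z : Type*} {R : X → Y → Z → Prop}
    {P Q : Set X} {A : Set Y} (h : InterpolatesOff R (P ∪ Q) A) :
    InterpolatesOff R P A ∨ ∃ s : Set Y, s.Finite ∧ InterpolatesOff R Q (A ∪ s) := by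
  refine or_iff_not_imp_left.mpr fun hP => ?_
  obtain ⟨m, ys₀, hinj₀, hout₀, zs₀, hbad⟩ : ∃ (m : ℕ) (ys₀ : Fin m → Y),
      Function.Injective ys₀ ∧ (∀ j, ys₀ j ∉ A) ∧ ∃ zs₀ : Fin m → Z,
        ∀ x ∈ P, ∃ j, ¬ R x (ys₀ j) (zs₀ j) := by
    simpa [InterpolatesOff] using hP
  refine ⟨Set.range ys₀, Set.finite_range ys₀, fun n ys hinj hout zs => ?_⟩
  have hinj' : Function.Injective (Fin.append ys ys₀) :=
    Fin.append_injective_iff.mpr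
      ⟨hinj, hinj₀, fun i j hij => hout i (Or.inr ⟨j, hij.symm⟩)⟩
  have hout' : ∀ i, Fin.append ys ys₀ i ∉ A := by
    simpa only [Fin.forall_fin_add, Fin.append_left, Fin.append_right] using
      ⟨fun i hi => hout i (Or.inl hi), hout₀⟩
  obtain ⟨x, hx, hR⟩ := h _ _ hinj' hout' (Fin.append zs zs₀)
  simp only [Fin.forall_fin_add, Fin.append_left, Fin.append_right] at hR
  rcases hx with hxP | hxQ
  · obtain ⟨j, hj⟩ := hbad x hxP
    exact absurd (hR.2 j) hj
  · exact ⟨x, hxQ, hR.1⟩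

section

variable {L : Language} {Fg : L.Formula (Fin 3)} {M N : Type} [L.Structure M]
  [L.Structure N] {e : M ↪ₑ[L] N} {k : ℕ} {a : Fin k → M}

theorem bigWitness_iff {φ : L.Formula (Fin k ⊕ Fin 1)} :
    BigWitness L Fg e φ a ↔ ∃ A : Set N, A.Countable ∧
      InterpolatesOff (fun x y z => Fg.Realize ![x, y, z])
        {x | φ.Realize (Sum.elim (fun i => e (a i)) fun _ => x)} A :=
  Iff.rfl

theorem BigWitness.or_of_sup {φ ψ : L.Formula (Fin k ⊕ Fin 1)}
    (h : BigWitness L Fg e (φ ⊔ ψ) a) : BigWitness L Fg e φ a ∨ BigWitness L Fg e ψ a := by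
  obtain ⟨A, hA, hint⟩ := bigWitness_iff.mp h
  simp only [Formula.realize_sup, Set.ofPred_or] at hint
  rcases hint.or_exists_finite_of_union with hφ | ⟨s, hs, hψ⟩
  · exact Or.inl (bigWitness_iff.mpr ⟨A, hA, hφ⟩)
  · exact Or.inr (bigWitness_iff.mpr ⟨A ∪ s, hA.union hs.countable, hψ⟩)

end

theorem isBig_sup_of_isBig_general
    (L : FirstOrder.Language.{0, 0}) (Fg : L.Formula (Fin 3))
    (M : Type) [L.Structure M]
    (k : ℕ) (φ ψ : L.Formula (Fin k ⊕ Fin 1)) (a : Fin k → M)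
    (hbig : IsBig L Fg M (φ ⊔ ψ) a) :
    IsBig L Fg M φ a ∨ IsBig L Fg M ψ a := by
  obtain ⟨N, _, e, hsat, hw⟩ := hbig
  exact hw.or_of_sup.imp (fun hφ => ⟨N, _, e, hsat, hφ⟩) fun hψ => ⟨N, _, e, hsat, hψ⟩

/-- Under the standing assumptions, if `φ(x, ā) ∨ ψ(x, ā)` is
`Γ^sind_F`-big in `M ⊨ T`, then `φ` is `Γ^sind_F`-big in `M` or `ψ` is `Γ^sind_F`-big
in `M`. -/
theorem isBig_sup_of_isBig
    (L : FirstOrder.Language.{0, 0}) (ltS : L.Relations 2) (zeroS : L.Constants)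
    (succS : L.Functions 1) (T : L.Theory) (Fg : L.Formula (Fin 3))
    (h : StandingAssumptions L ltS zeroS succS T Fg)
    (M : Type) [L.Structure M] (hM : M ⊨ T)
    (k : ℕ) (φ ψ : L.Formula (Fin k ⊕ Fin 1)) (a : Fin k → M)
    (hbig : IsBig L Fg M (φ ⊔ ψ) a) :
    IsBig L Fg M φ a ∨ IsBig L Fg M ψ a :=
  isBig_sup_of_isBig_general L Fg M k φ ψ a hbig
end

section
/- The Γ^sind_F-bigness of a formula φ(x, ā) in a model M ⊨ T does not depend on the choice of |T|⁺-saturated elementary extension: if the defining condition holds in some |T|⁺-saturated elementary extension N ≻ M, then it holds in every |T|⁺-saturated elementary extension of M. -/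
open FirstOrder Language Structure

/-!
Call an injective tuple `ys` bad when some prescription of values `F(x, ys i)` is met by no `x`
satisfying `φ(x, ā)`. In the saturated `N₁` every bad `n`-tuple meets the countable set `A`, and
saturation shrinks `A` to a finite set meeting every bad `n`-tuple: otherwise a first coordinate
generic over `A` can be realized, and the induction hypothesis applies to its fibre. The statement
"some `m` elements meet every bad `n`-tuple" is first order in `ā`, so it passes from `N₁` down
to `M` and back up to `N₂`, where the union over `n` of these finite sets witnesses bigness.
-/

open Set

section

variable {L : FirstOrder.Language.{0, 0}} {M N : Type} [L.Structure M] [L.Structure N]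

theorem Set.Definable.setOf_realize {α β : Type} (θ : L.Formula (β ⊕ α)) (c : β → N) :
    (range c).Definable L {v : α → N | θ.Realize (Sum.elim c v)} := by
  rw [definable_iff_exists_formula_sum]
  refine ⟨θ.relabel (Sum.map (fun b => ⟨c b, b, rfl⟩) id), ?_⟩
  ext v
  simp only [mem_ofPred_eq, Formula.realize_relabel]
  congr! 1
  ext (b | i) <;> rfl

theorem AlephOneSaturated.nonempty_iInter (hsat : AlephOneSaturated L N) {C : Set N}
    (hC : C.Countable) {ι : Type*} {s : ι → Set N} (hs : ∀ i, C.Definable₁ L (s i))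
    (hfin : ∀ t : Finset ι, (⋂ i ∈ t, s i).Nonempty) : (⋂ i, s i).Nonempty := by
  classical
  simp only [Definable₁, definable_iff_exists_formula_sum] at hs
  choose ψ hψ using hs
  have mem_iff (i : ι) (x : N) : x ∈ s i ↔ (ψ i).Realize (Sum.elim Subtype.val fun _ => x) :=
    Eq.to_iff (congrArg (fun S => (fun _ => x) ∈ S) (hψ i))
  obtain ⟨x, hx⟩ := hsat C hC (range ψ) fun S₀ hS₀ => by
    obtain ⟨t, -, rfl⟩ := Finset.subset_set_image_iff.mp (image_univ ▸ hS₀)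
    obtain ⟨x, hx⟩ := hfin t
    refine ⟨x, fun _ hψt => ?_⟩
    obtain ⟨i, hi, rfl⟩ := Finset.mem_image.mp hψt
    exact (mem_iff i x).mp (mem_iInter₂.mp hx i hi)
  exact ⟨x, mem_iInter.mpr fun i => (mem_iff i x).mpr (hx _ ⟨i, rfl⟩)⟩

theorem Set.Finite.definable_forall_notMem {A F : Set N} (hF : F.Finite) (hFA : F ⊆ A)
    {α : Type} [Finite α] : A.Definable L {w : α → N | ∀ i, w i ∉ F} := by
  have := hF.to_subtype
  rw [definable_iff_exists_formula_sum]
  refine ⟨Formula.iInf fun p : α × F =>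
    ∼((Term.var (Sum.inr p.1)).equal (Term.var (Sum.inl ⟨p.2, hFA p.2.2⟩))), ?_⟩
  ext w
  simp only [mem_ofPred_eq, Formula.realize_iInf, Formula.realize_not, Formula.realize_equal,
    Term.realize_var, Sum.elim_inl, Sum.elim_inr, Prod.forall, Subtype.forall]
  exact forall_congr' fun i => ⟨fun h f hf hwf => h (hwf ▸ hf), fun h hw => h _ hw rfl⟩

def IsHittingSet {α : Type} (F : Set N) (D : Set (α → N)) : Prop :=
  ∀ w ∈ D, ∃ i, w i ∈ F

theorem AlephOneSaturated.exists_generic_coord (hsat : AlephOneSaturated L N) {C A : Set N}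
    (hC : C.Countable) (hA : A.Countable) {α : Type} [Finite α] {D : Set (α → N)}
    (hD : C.Definable L D) (j : α) (hfree : ∀ F ⊆ A, F.Finite → ∃ w ∈ D, ∀ i, w i ∉ F) :
    ∃ v ∉ A, ∀ F ⊆ A, F.Finite → ∃ w ∈ D, w j = v ∧ ∀ i, w i ∉ F := by
  let s : {F : Set N // F ⊆ A ∧ F.Finite} → Set N := fun F =>
    {v | ∃ w ∈ D, w j = v ∧ ∀ i, w i ∉ F.1}
  have hs (F) : (C ∪ A).Definable₁ L (s F) := by
    have := ((hD.mono subset_union_left).inter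
      (F.2.2.definable_forall_notMem (F.2.1.trans subset_union_right))).image_comp
        (fun _ : Fin 1 => j)
    unfold Definable₁
    convert this using 1
    ext x
    simp only [s, mem_ofPred_eq, mem_image, mem_inter_iff]
    constructor
    · rintro ⟨w, hw, hwx, hwF⟩
      exact ⟨w, ⟨hw, hwF⟩, funext fun i => by rw [Fin.fin_one_eq_zero i, ← hwx]; rfl⟩
    · rintro ⟨w, ⟨hw, hwF⟩, rfl⟩
      exact ⟨w, hw, rfl, hwF⟩
  obtain ⟨v, hv⟩ := hsat.nonempty_iInter (hC.union hA) hs fun t => by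
    obtain ⟨w, hw, hwt⟩ := hfree (⋃ F ∈ t, F.1) (iUnion₂_subset fun F _ => F.2.1)
      (t.finite_toSet.biUnion fun F _ => F.2.2)
    exact ⟨w j, mem_iInter₂.mpr fun F hF =>
      ⟨w, hw, rfl, fun i hi => hwt i (mem_iUnion₂.mpr ⟨F, hF, hi⟩)⟩⟩
  refine ⟨v, fun hvA => ?_, fun F hFA hF => mem_iInter.mp hv ⟨F, hFA, hF⟩⟩
  obtain ⟨w, -, rfl, hw⟩ :=
    mem_iInter.mp hv ⟨{v}, singleton_subset_iff.mpr hvA, finite_singleton v⟩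
  exact hw j rfl

theorem AlephOneSaturated.exists_finite_isHittingSet (hsat : AlephOneSaturated L N) {A : Set N}
    (hA : A.Countable) {n : ℕ} {C : Set N} (hC : C.Countable) {D : Set (Fin n → N)}
    (hD : C.Definable L D) (hDA : IsHittingSet A D) :
    ∃ F ⊆ A, F.Finite ∧ IsHittingSet F D := by
  induction n generalizing C with
  | zero => exact ⟨∅, empty_subset A, finite_empty, fun w hw => (hDA w hw).elim (·.elim0)⟩
  | succ n ih =>
    by_contra! hfree
    -- A first coordinate `v` generic over `A`: the fibre `D'` over it is hit by `A`, as `v ∉ A`,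
    -- but by no finite part of `A`.
    obtain ⟨v, hvA, hv⟩ := hsat.exists_generic_coord hC hA hD 0 fun F hFA hF => by
      simpa [IsHittingSet] using hfree F hFA hF
    let D' : Set (Fin n → N) := (· ∘ Fin.succ) '' (D ∩ {w | w 0 = v})
    have hD' : (insert v C).Definable L D' :=
      ((hD.mono (subset_insert v C)).inter
        ((Definable.singleton_of_mem L (mem_insert v C)).preimage_comp fun _ => 0)).image_comp
          Fin.succ
    have hD'A : IsHittingSet A D' := by
      rintro _ ⟨w, ⟨hw, rfl⟩, rfl⟩
      obtain ⟨i, hi⟩ := hDA w hw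
      cases i using Fin.cases with
      | zero => exact absurd hi hvA
      | succ i => exact ⟨i, hi⟩
    obtain ⟨F, hFA, hF, hFD'⟩ := ih (hC.insert v) hD' hD'A
    obtain ⟨w, hw, rfl, hwF⟩ := hv F hFA hF
    obtain ⟨i, hi⟩ := hFD' _ ⟨w, ⟨hw, rfl⟩, rfl⟩
    exact hwF _ hi

noncomputable def hittingFormula {β : Type} {n : ℕ} (θ : L.Formula (β ⊕ Fin n)) (m : ℕ) :
    L.Formula β :=
  Formula.iExs (Fin m) <| Formula.iAlls (Fin n) <|
    (θ.relabel (Sum.map Sum.inl id)).imp <| Formula.iSup fun p : Fin n × Fin m =>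
      (Term.var (Sum.inr p.1)).equal (Term.var (Sum.inl (Sum.inr p.2)))

theorem realize_hittingFormula {β : Type} {n : ℕ} (θ : L.Formula (β ⊕ Fin n)) (m : ℕ)
    (c : β → N) : (hittingFormula θ m).Realize c ↔
      ∃ us : Fin m → N, IsHittingSet (range us) {w | θ.Realize (Sum.elim c w)} := by
  simp only [hittingFormula, Formula.realize_iExs, Formula.realize_iAlls, Formula.realize_imp,
    Formula.realize_relabel, Formula.realize_iSup, Formula.realize_equal, Term.realize_var,
    Sum.elim_comp_map, Sum.elim_comp_inl, Function.comp_id, Sum.elim_inl, Sum.elim_inr,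
    Prod.exists, IsHittingSet, mem_ofPred_eq, mem_range]
  exact exists_congr fun us => forall₂_congr fun w _ => exists_congr fun i => by
    simp only [eq_comm]

theorem exists_finite_isHittingSet_iff_realize {β : Type} {n : ℕ} (θ : L.Formula (β ⊕ Fin n))
    (c : β → N) : (∃ F : Set N, F.Finite ∧ IsHittingSet F {w | θ.Realize (Sum.elim c w)}) ↔
      ∃ m, (hittingFormula θ m).Realize c := by
  simp only [realize_hittingFormula]
  constructor
  · rintro ⟨F, hF, hFD⟩
    obtain ⟨m, us, -, rfl⟩ := hF.fin_param
    exact ⟨m, us, hFD⟩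
  · rintro ⟨m, us, hus⟩
    exact ⟨range us, finite_range us, hus⟩

theorem FirstOrder.Language.ElementaryEmbedding.exists_finite_isHittingSet_iff
    (e : M ↪ₑ[L] N) {β : Type} {n : ℕ} (θ : L.Formula (β ⊕ Fin n)) (a : β → M) :
    (∃ F : Set N, F.Finite ∧ IsHittingSet F {w | θ.Realize (Sum.elim (e ∘ a) w)}) ↔
      ∃ F : Set M, F.Finite ∧ IsHittingSet F {w | θ.Realize (Sum.elim a w)} := by
  simp only [exists_finite_isHittingSet_iff_realize, e.map_formula]

noncomputable def distinctFormula (n : ℕ) : L.Formula (Fin n) :=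
  Formula.iInf fun p : {p : Fin n × Fin n // p.1 ≠ p.2} =>
    ∼((Term.var p.1.1).equal (Term.var p.1.2))

theorem realize_distinctFormula {n : ℕ} (v : Fin n → N) :
    (distinctFormula (L := L) n).Realize v ↔ Function.Injective v := by
  simp only [distinctFormula, Formula.realize_iInf, Formula.realize_not, Formula.realize_equal,
    Term.realize_var, Subtype.forall, Prod.forall]
  exact ⟨fun h i j hij => by_contra fun hne => h i j hne hij, fun h i j hne hij => hne (h hij)⟩

def Interpolates (Fg : L.Formula (Fin 3)) {k : ℕ} (φ : L.Formula (Fin k ⊕ Fin 1))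
    (c : Fin k → N) {n : ℕ} (ys : Fin n → N) : Prop :=
  ∀ zs : Fin n → N, ∃ x : N,
    φ.Realize (Sum.elim c fun _ => x) ∧ ∀ i, Fg.Realize ![x, ys i, zs i]

noncomputable def interpolatesFormula (Fg : L.Formula (Fin 3)) {k : ℕ}
    (φ : L.Formula (Fin k ⊕ Fin 1)) (n : ℕ) : L.Formula (Fin k ⊕ Fin n) :=
  Formula.iAlls (Fin n) <| Formula.iExs (Fin 1) <|
    φ.relabel (Sum.elim (Sum.inl ∘ Sum.inl ∘ Sum.inl) Sum.inr) ⊓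
      Formula.iInf fun i : Fin n =>
        Fg.relabel ![Sum.inr 0, Sum.inl (Sum.inl (Sum.inr i)), Sum.inl (Sum.inr i)]

theorem realize_interpolatesFormula (Fg : L.Formula (Fin 3)) {k : ℕ}
    (φ : L.Formula (Fin k ⊕ Fin 1)) (c : Fin k → N) {n : ℕ} (ys : Fin n → N) :
    (interpolatesFormula Fg φ n).Realize (Sum.elim c ys) ↔ Interpolates Fg φ c ys := by
  simp only [interpolatesFormula, Formula.realize_iAlls, Formula.realize_iExs,
    Formula.realize_inf, Formula.realize_relabel, Formula.realize_iInf]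
  have hφ (zs : Fin n → N) (xf : Fin 1 → N) : Sum.elim (Sum.elim (Sum.elim c ys) zs) xf ∘
      Sum.elim (Sum.inl ∘ Sum.inl ∘ Sum.inl) Sum.inr = Sum.elim c xf := by
    ext (_ | _) <;> rfl
  have hFg (zs : Fin n → N) (xf : Fin 1 → N) (i : Fin n) :
      Sum.elim (Sum.elim (Sum.elim c ys) zs) xf ∘
        ![Sum.inr 0, Sum.inl (Sum.inl (Sum.inr i)), Sum.inl (Sum.inr i)] = ![xf 0, ys i, zs i] := by
    ext j; fin_cases j <;> rfl
  simp only [hφ, hFg]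
  refine forall_congr' fun zs => ⟨fun ⟨xf, hxf⟩ => ⟨xf 0, ?_⟩, fun ⟨x, hx⟩ => ⟨fun _ => x, hx⟩⟩
  rwa [show xf = fun _ => xf 0 from funext fun i => congrArg xf (Fin.fin_one_eq_zero i)] at hxf

noncomputable def nonInterpolatingFormula (Fg : L.Formula (Fin 3)) {k : ℕ}
    (φ : L.Formula (Fin k ⊕ Fin 1)) (n : ℕ) : L.Formula (Fin k ⊕ Fin n) :=
  (distinctFormula n).relabel Sum.inr ⊓ ∼(interpolatesFormula Fg φ n)

theorem realize_nonInterpolatingFormula (Fg : L.Formula (Fin 3)) {k : ℕ}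
    (φ : L.Formula (Fin k ⊕ Fin 1)) (c : Fin k → N) {n : ℕ} (ys : Fin n → N) :
    (nonInterpolatingFormula Fg φ n).Realize (Sum.elim c ys) ↔
      Function.Injective ys ∧ ¬ Interpolates Fg φ c ys := by
  rw [nonInterpolatingFormula, Formula.realize_inf, Formula.realize_not, Formula.realize_relabel,
    Sum.elim_comp_inr, realize_distinctFormula, realize_interpolatesFormula]

end

theorem bigWitness_independent_of_saturated_extension_general
    (L : FirstOrder.Language.{0, 0}) (Fg : L.Formula (Fin 3))
    (M : Type) [L.Structure M]
    (k : ℕ) (φ : L.Formula (Fin k ⊕ Fin 1)) (a : Fin k → M)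
    (N₁ : Type) [L.Structure N₁] (e₁ : M ↪ₑ[L] N₁)
    (hsat₁ : AlephOneSaturated L N₁) (h₁ : BigWitness L Fg e₁ φ a)
    (N₂ : Type) [L.Structure N₂] (e₂ : M ↪ₑ[L] N₂) :
    BigWitness L Fg e₂ φ a := by
  obtain ⟨A, hA, hA_interp⟩ := h₁
  have hit (n : ℕ) : ∃ F : Set N₂, F.Finite ∧ IsHittingSet F
      {ys | (nonInterpolatingFormula Fg φ n).Realize (Sum.elim (e₂ ∘ a) ys)} := by
    rw [e₂.exists_finite_isHittingSet_iff, ← e₁.exists_finite_isHittingSet_iff]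
    obtain ⟨F, -, hF, hFD⟩ := hsat₁.exists_finite_isHittingSet hA (finite_range _).countable
      (Definable.setOf_realize _ _) fun ys hys => by
        rw [mem_ofPred_eq, realize_nonInterpolatingFormula] at hys
        by_contra! hysA
        exact hys.2 (hA_interp n ys hys.1 hysA)
    exact ⟨F, hF, hFD⟩
  choose F hF hFD using hit
  refine ⟨⋃ n, F n, countable_iUnion fun n => (hF n).countable, fun n ys hys hysF => ?_⟩
  by_contra hys_interp
  obtain ⟨i, hi⟩ := hFD n ys ((realize_nonInterpolatingFormula ..).mpr ⟨hys, hys_interp⟩)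
  exact hysF i (mem_iUnion_of_mem n hi)

/-- Under the standing assumptions, `Γ^sind_F`-bigness does not
depend on the choice of `|T|⁺`-saturated elementary extension: if the witnessing
condition holds in some `|T|⁺`-saturated elementary extension of `M`, then it holds
in every such extension. -/
theorem bigWitness_independent_of_saturated_extension
    (L : FirstOrder.Language.{0, 0}) (ltS : L.Relations 2) (zeroS : L.Constants)
    (succS : L.Functions 1) (T : L.Theory) (Fg : L.Formula (Fin 3))
    (h : StandingAssumptions L ltS zeroS succS T Fg)
    (M : Type) [L.Structure M] (hM : M ⊨ T)
    (k : ℕ) (φ : L.Formula (Fin k ⊕ Fin 1)) (a : Fin k → M)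
    (N₁ : Type) [L.Structure N₁] (e₁ : M ↪ₑ[L] N₁)
    (hsat₁ : AlephOneSaturated L N₁) (h₁ : BigWitness L Fg e₁ φ a)
    (N₂ : Type) [L.Structure N₂] (e₂ : M ↪ₑ[L] N₂)
    (hsat₂ : AlephOneSaturated L N₂) :
    BigWitness L Fg e₂ φ a :=
  bigWitness_independent_of_saturated_extension_general L Fg M k φ a N₁ e₁ hsat₁ h₁ N₂ e₂
end
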